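/- (Descent lemma for inexact proximal gradient, version 1) Let f: R^d -> R be L-Lipschitz differentiable and r: R^d -> R be convex. Let x_{k+1} = prox_{r/L}(x_k - (1/L) hat{g}_k), where hat{g}_k is an approximation of g_k = nabla f(x_k). Then F = f + r satisfies F(x_{k+1}) <= F(x_k) - (1/(4L)) ||hat{Delta}_k||_2^2 + (1/L) ||g_k - hat{g}_k||_2^2, where hat{Delta}_k = L (x_{k+1} - x_k). -/

import Mathlib

/-!
The quadratic upper bound `f y ≤ f x + ⟪∇f x, y - x⟫ + L/2 ‖y - x‖²` for a function with
`L`-Lipschitz gradient, applied at `y = x_{k+1} = x_k - Δ/L`, and the subgradient inequality for `r`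
at `x_{k+1}`, tested at `x_k`, add up to `F(x_{k+1}) ≤ F(x_k) - ⟪∇f(x_k) - ĝ, Δ⟫/L - ‖Δ‖²/(2L)`.
Young's inequality `-⟪a, Δ⟫ ≤ ‖a‖² + ‖Δ‖²/4` then trades the gradient error against half of
that descent.
-/

open scoped RealInnerProductSpace

variable {E : Type*} [NormedAddCommGroup E] [InnerProductSpace ℝ E]

theorem real_inner_le_norm_sq_add_norm_sq_div_four (a b : E) :
    ⟪a, b⟫ ≤ ‖a‖ ^ 2 + ‖b‖ ^ 2 / 4 := by
  have h := norm_sub_sq_real a ((1 / 2 : ℝ) • b)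
  rw [real_inner_smul_right, norm_smul, Real.norm_of_nonneg (by norm_num)] at h
  nlinarith [sq_nonneg ‖a - (1 / 2 : ℝ) • b‖]

variable [CompleteSpace E]

theorem HasGradientAt.hasDerivAt_comp_add_smul {f : E → ℝ} {g x u : E} {t : ℝ}
    (hf : HasGradientAt f g (x + t • u)) :
    HasDerivAt (fun s : ℝ => f (x + s • u)) ⟪g, u⟫ t := by
  have hline : HasDerivAt (fun s : ℝ => x + s • u) u t := by
    simpa using ((hasDerivAt_id t).smul_const u).const_add x
  exact (hasGradientAt_iff_hasFDerivAt.mp hf).comp_hasDerivAt t hline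

section LipschitzGradient

variable {f : E → ℝ} {L : ℝ}

theorem inner_gradient_add_smul_sub_le
    (hlip : ∀ x y, ‖gradient f x - gradient f y‖ ≤ L * ‖x - y‖) (x u : E) {t : ℝ} (ht : 0 ≤ t) :
    ⟪gradient f (x + t • u) - gradient f x, u⟫ ≤ L * t * ‖u‖ ^ 2 :=
  calc ⟪gradient f (x + t • u) - gradient f x, u⟫
      ≤ ‖gradient f (x + t • u) - gradient f x‖ * ‖u‖ := real_inner_le_norm _ _
    _ ≤ L * ‖(x + t • u) - x‖ * ‖u‖ := by gcongr; exact hlip _ _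
    _ = L * t * ‖u‖ ^ 2 := by
      rw [add_sub_cancel_left, norm_smul, Real.norm_of_nonneg ht]; ring

theorem apply_le_add_inner_gradient_add_sq (hf : Differentiable ℝ f)
    (hlip : ∀ x y, ‖gradient f x - gradient f y‖ ≤ L * ‖x - y‖) (x y : E) :
    f y ≤ f x + ⟪gradient f x, y - x⟫ + L / 2 * ‖y - x‖ ^ 2 := by
  set u := y - x
  set φ : ℝ → ℝ := fun t => f (x + t • u) - t * ⟪gradient f x, u⟫ - L / 2 * t ^ 2 * ‖u‖ ^ 2
  have hφ : ∀ t, HasDerivAt φ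
      (⟪gradient f (x + t • u) - gradient f x, u⟫ - L * t * ‖u‖ ^ 2) t := by
    intro t
    have hquad := ((hasDerivAt_pow 2 t).const_mul (L / 2)).mul_const (‖u‖ ^ 2)
    refine ((((hf _).hasGradientAt.hasDerivAt_comp_add_smul).sub
      ((hasDerivAt_id t).mul_const ⟪gradient f x, u⟫)).sub hquad).congr_deriv ?_
    rw [inner_sub_left]; push_cast; ring
  have hanti : AntitoneOn φ (Set.Icc 0 1) := by
    refine antitoneOn_of_deriv_nonpos (convex_Icc 0 1)
      (fun t _ => (hφ t).continuousAt.continuousWithinAt)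
      (fun t _ => (hφ t).differentiableAt.differentiableWithinAt) fun t ht => ?_
    rw [interior_Icc] at ht
    rw [(hφ t).deriv, sub_nonpos]
    exact inner_gradient_add_smul_sub_le hlip x u ht.1.le
  have h10 : φ 1 ≤ φ 0 := hanti (by norm_num) (by norm_num) zero_le_one
  simp only [φ, u, one_smul, add_sub_cancel, zero_smul, add_zero] at h10
  linarith

end LipschitzGradient

theorem prox_descent_v1_general {d : ℕ} (L : ℝ) (hL : 0 < L)
    (f r : EuclideanSpace ℝ (Fin d) → ℝ)
    (hdiff : Differentiable ℝ f)
    (hlip : ∀ x y, ‖gradient f x - gradient f y‖ ≤ L * ‖x - y‖)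
    (xk xk1 ghat v : EuclideanSpace ℝ (Fin d))
    (hsub : ∀ y, r xk1 + ⟪v, y - xk1⟫ ≤ r y)
    (hstep : xk1 = xk - (1 / L) • (v + ghat)) :
    f xk1 + r xk1 ≤ f xk + r xk - (1 / (4 * L)) * ‖v + ghat‖ ^ 2
      + (1 / L) * ‖gradient f xk - ghat‖ ^ 2 := by
  set Δ := v + ghat
  set g := gradient f xk
  have hfwd : xk1 - xk = -(1 / L) • Δ := by rw [hstep]; module
  have hbwd : xk - xk1 = (1 / L) • Δ := by rw [hstep]; module
  have hf := apply_le_add_inner_gradient_add_sq hdiff hlip xk xk1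
  have hr := hsub xk
  have hyoung := real_inner_le_norm_sq_add_norm_sq_div_four (g - ghat) (-Δ)
  have hΔ : ‖Δ‖ ^ 2 = ⟪v, Δ⟫ + ⟪ghat, Δ⟫ := by
    rw [← real_inner_self_eq_norm_sq, inner_add_left]
  rw [hfwd, real_inner_smul_right, norm_smul, norm_neg,
    Real.norm_of_nonneg (by positivity)] at hf
  rw [hbwd, real_inner_smul_right] at hr
  rw [inner_neg_right, inner_sub_left, norm_neg] at hyoung
  have hLinv : L * (1 / L) = 1 := by field_simp
  linear_combination
    hf + hr + (1 / L) * hyoung + (1 / L) * hΔ + (1 / L) * ‖Δ‖ ^ 2 / 2 * hLinv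

/-- Descent lemma for inexact proximal gradient, version 1. -/
theorem prox_descent_v1 {d : ℕ} (L : ℝ) (hL : 0 < L)
    (f r : EuclideanSpace ℝ (Fin d) → ℝ)
    (hdiff : Differentiable ℝ f)
    (hlip : ∀ x y, ‖gradient f x - gradient f y‖ ≤ L * ‖x - y‖)
    (hr : ConvexOn ℝ Set.univ r)
    (xk xk1 ghat v : EuclideanSpace ℝ (Fin d))
    (hsub : ∀ y, r xk1 + ⟪v, y - xk1⟫ ≤ r y)
    (hstep : xk1 = xk - (1 / L) • (v + ghat)) :
    f xk1 + r xk1 ≤ f xk + r xk - (1 / (4 * L)) * ‖v + ghat‖ ^ 2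
      + (1 / L) * ‖gradient f xk - ghat‖ ^ 2 :=
  prox_descent_v1_general L hL f r hdiff hlip xk xk1 ghat v hsub hstep
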